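/- arXiv:2212.04014 — 4 statements merged into one kernel-verified Lean document; each statement's English description precedes it below -/
import Mathlib

section
/- For a pseudo self-concordant function f with parameter R, the Hessian satisfies e^{−R‖y−x‖₂} ∇²f(x) ⪯ ∇²f(y) ⪯ e^{R‖y−x‖₂} ∇²f(x) for all x, y ∈ ℝ^p. -/
/-!
Fix `x, y, u` and put `v = y - x`, `g t = ∇²f(x + t v)[u, u]`. Then `g' t = D³f(x + t v)[v, u, u]`,
which equals `D³f(x + t v)[u, u, v]` by symmetry of the third derivative, so pseudo
self-concordance gives `|g'| ≤ R ‖v‖ g`. Grönwall's inequality yields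
`g 1 ≤ e^{R ‖v‖} g 0`, the upper bound; exchanging `x` and `y` gives the lower one.
The defining inequality with `v = u` already forces `∇²f ⪰ 0`, so `g = |g|`.
-/

open Set

section Symmetry

variable {E F : Type*} [NormedAddCommGroup E] [NormedSpace ℝ E]
  [NormedAddCommGroup F] [NormedSpace ℝ F] {f : E → F}

theorem iteratedFDeriv_three_swap_left {x : E} (hf : ContDiffAt ℝ 3 f x) (a b c : E) :
    iteratedFDeriv ℝ 3 f x ![a, b, c] = iteratedFDeriv ℝ 3 f x ![b, a, c] := by
  have hsymm : IsSymmSndFDerivAt ℝ (fderiv ℝ f) x :=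
    (hf.fderiv_right (m := 2) (by norm_num)).isSymmSndFDerivAt (by simp)
  rw [iteratedFDeriv_succ_apply_right (n := 2), iteratedFDeriv_succ_apply_right (n := 2)]
  convert congrArg (· c) (IsSymmSndFDerivAt.iteratedFDeriv_cons (hf := hsymm) (v := a) (w := b))
    using 3 <;> first | rfl | (funext i; fin_cases i <;> rfl)

theorem iteratedFDeriv_three_swap_right (hf : ContDiff ℝ 3 f) (x a b c : E) :
    iteratedFDeriv ℝ 3 f x ![a, b, c] = iteratedFDeriv ℝ 3 f x ![a, c, b] := by
  have hsymm : (fun y ↦ iteratedFDeriv ℝ 2 f y ![b, c]) = fun y ↦ iteratedFDeriv ℝ 2 f y ![c, b] :=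
    funext fun y ↦ IsSymmSndFDerivAt.iteratedFDeriv_cons
      (hf := (hf.contDiffAt.of_le (by norm_num : (2 : WithTop ℕ∞) ≤ 3)).isSymmSndFDerivAt (by simp))
  have hdiff := hf.differentiable_iteratedFDeriv (m := 2) (by norm_num) x
  rw [iteratedFDeriv_succ_apply_left, iteratedFDeriv_succ_apply_left]
  have := congrArg (fderiv ℝ · x a) hsymm
  simp only [fderiv_continuousMultilinear_apply_const_apply hdiff] at this
  exact this

end Symmetry

theorem hasDerivAt_iteratedFDeriv_add_smul {E F : Type*} [NormedAddCommGroup E] [NormedSpace ℝ E]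
    [NormedAddCommGroup F] [NormedSpace ℝ F] {f : E → F} {n : ℕ} (hf : ContDiff ℝ (n + 1) f)
    (x v : E) (m : Fin n → E) (t : ℝ) :
    HasDerivAt (fun s : ℝ ↦ iteratedFDeriv ℝ n f (x + s • v) m)
      (iteratedFDeriv ℝ (n + 1) f (x + t • v) (Fin.cons v m)) t := by
  have hline : HasDerivAt (fun s : ℝ ↦ x + s • v) v t := by
    simpa using ((hasDerivAt_id t).smul_const v).const_add x
  have hD := ((hf.differentiable_iteratedFDeriv (m := n) (by norm_cast; omega)) (x + t • v)
    ).hasFDerivAt.continuousMultilinear_apply_const m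
  rw [iteratedFDeriv_succ_apply_left]
  exact hD.comp_hasDerivAt t hline

theorem le_mul_exp_of_abs_deriv_le_mul_abs {g g' : ℝ → ℝ} {K a b : ℝ}
    (hg : ∀ t, HasDerivAt g (g' t) t) (hab : a ≤ b) (ha : 0 ≤ g a)
    (bound : ∀ t ∈ Ico a b, |g' t| ≤ K * |g t|) :
    g b ≤ g a * Real.exp (K * (b - a)) := by
  have := norm_le_gronwallBound_of_norm_deriv_right_le (ε := 0) (δ := |g a|)
    (fun t _ ↦ (hg t).continuousAt.continuousWithinAt) (fun t _ ↦ (hg t).hasDerivWithinAt)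
    le_rfl (by simpa using bound) b ⟨hab, le_rfl⟩
  rw [gronwallBound_ε0, Real.norm_eq_abs, abs_of_nonneg ha] at this
  exact (le_abs_self _).trans this

def PseudoSelfConcordant {E : Type*} [NormedAddCommGroup E] [NormedSpace ℝ E]
    (R : ℝ) (f : E → ℝ) : Prop :=
  ∀ x u v, |iteratedFDeriv ℝ 3 f x ![u, u, v]| ≤ R * iteratedFDeriv ℝ 2 f x ![u, u] * ‖v‖

namespace PseudoSelfConcordant

variable {E : Type*} [NormedAddCommGroup E] [NormedSpace ℝ E] {R : ℝ} {f : E → ℝ}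

theorem iteratedFDeriv_two_nonneg (h : PseudoSelfConcordant R f) (hR : 0 < R) (x u : E) :
    0 ≤ iteratedFDeriv ℝ 2 f x ![u, u] := by
  rcases eq_or_ne u 0 with rfl | hu
  · exact ((iteratedFDeriv ℝ 2 f x).map_coord_zero 0 rfl).ge
  · have hRu : 0 < R * ‖u‖ := mul_pos hR (norm_pos_iff.2 hu)
    have := (abs_nonneg _).trans (h x u u)
    nlinarith

theorem iteratedFDeriv_two_le_exp_mul (h : PseudoSelfConcordant R f) (hf : ContDiff ℝ 3 f)
    (hR : 0 < R) (x y u : E) :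
    iteratedFDeriv ℝ 2 f y ![u, u] ≤
      Real.exp (R * ‖y - x‖) * iteratedFDeriv ℝ 2 f x ![u, u] := by
  set v := y - x
  have hg (t : ℝ) := hasDerivAt_iteratedFDeriv_add_smul (n := 2) hf x v ![u, u] t
  have bound (t : ℝ) : |iteratedFDeriv ℝ 3 f (x + t • v) (Fin.cons v ![u, u])| ≤
      R * ‖v‖ * |iteratedFDeriv ℝ 2 f (x + t • v) ![u, u]| := by
    rw [abs_of_nonneg (h.iteratedFDeriv_two_nonneg hR _ u)]
    change |iteratedFDeriv ℝ 3 f (x + t • v) ![v, u, u]| ≤ _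
    rw [iteratedFDeriv_three_swap_left hf.contDiffAt, iteratedFDeriv_three_swap_right hf]
    exact (h _ u v).trans_eq (by ring)
  have := le_mul_exp_of_abs_deriv_le_mul_abs hg zero_le_one
    (h.iteratedFDeriv_two_nonneg hR _ u) fun t _ ↦ bound t
  simpa [v, mul_comm] using this

end PseudoSelfConcordant

theorem stmt_5_general {p : ℕ} (R : ℝ) (hR : 0 < R) (f : EuclideanSpace ℝ (Fin p) → ℝ)
    (hf : ContDiff ℝ 3 f)
    (hsc : ∀ x u v, |iteratedFDeriv ℝ 3 f x ![u, u, v]| ≤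
      R * (iteratedFDeriv ℝ 2 f x ![u, u]) * ‖v‖) :
    ∀ x y u,
      Real.exp (-(R * ‖y - x‖)) * iteratedFDeriv ℝ 2 f x ![u, u] ≤
        iteratedFDeriv ℝ 2 f y ![u, u] ∧
      iteratedFDeriv ℝ 2 f y ![u, u] ≤
        Real.exp (R * ‖y - x‖) * iteratedFDeriv ℝ 2 f x ![u, u] := by
  intro x y u
  have hpsc : PseudoSelfConcordant R f := hsc
  refine ⟨?_, hpsc.iteratedFDeriv_two_le_exp_mul hf hR x y u⟩
  rw [Real.exp_neg, inv_mul_le_iff₀ (Real.exp_pos _), ← norm_sub_rev]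
  exact hpsc.iteratedFDeriv_two_le_exp_mul hf hR y x u

/-- For a pseudo self-concordant function `f` with parameter `R`, the Hessian quadratic forms
satisfy `e^{-R‖y-x‖} ∇²f(x)[u,u] ≤ ∇²f(y)[u,u] ≤ e^{R‖y-x‖} ∇²f(x)[u,u]` (Loewner order). -/
theorem stmt_5 {p : ℕ} (R : ℝ) (hR : 0 < R) (f : EuclideanSpace ℝ (Fin p) → ℝ)
    (hf : ContDiff ℝ 3 f) (hconv : ConvexOn ℝ Set.univ f)
    (hsc : ∀ x u v, |iteratedFDeriv ℝ 3 f x ![u, u, v]| ≤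
      R * (iteratedFDeriv ℝ 2 f x ![u, u]) * ‖v‖) :
    ∀ x y u,
      Real.exp (-(R * ‖y - x‖)) * iteratedFDeriv ℝ 2 f x ![u, u] ≤
        iteratedFDeriv ℝ 2 f y ![u, u] ∧
      iteratedFDeriv ℝ 2 f y ![u, u] ≤
        Real.exp (R * ‖y - x‖) * iteratedFDeriv ℝ 2 f x ![u, u] :=
  stmt_5_general R hR f hf hsc
end

section
/- The binary logistic loss ℓ(θ) = log(1 + exp(−y·θᵀx)) with ‖x‖₂ ≤ M and y ∈ {±1} is pseudo self-concordant with parameter R = M: |D³ℓ(θ)[u,u,v]| ≤ M ‖v‖₂ · uᵀ∇²ℓ(θ)u for all θ, u, v. -/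
/-!
Writing `ℓ = h ∘ L` with `h(s) = log (1 + exp (-s))` and `L θ = ⟪y x, θ⟫`, the chain rule gives
`D³ℓ(θ)[u,u,v] = h'''(Lθ) (Lu)² (Lv)` and `D²ℓ(θ)[u,u] = h''(Lθ) (Lu)²`. With `σ` the sigmoid,
`h'' = σ (1 - σ)` and `h''' = σ (1 - σ) (1 - 2σ)`, so `|h'''| ≤ h''`; and `|Lv| ≤ ‖y x‖ ‖v‖ = ‖x‖ ‖v‖`.
-/

open Real

section CompLinear

variable {E : Type*} [NormedAddCommGroup E] [NormedSpace ℝ E]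

theorem iteratedFDeriv_comp_clm_apply {k : ℕ} {f : ℝ → ℝ} (hf : ContDiff ℝ k f)
    (L : E →L[ℝ] ℝ) (θ : E) (m : Fin k → E) :
    iteratedFDeriv ℝ k (f ∘ L) θ m = iteratedDeriv k f (L θ) * ∏ i, L (m i) := by
  rw [L.iteratedFDeriv_comp_right hf θ le_rfl,
    ContinuousMultilinearMap.compContinuousLinearMap_apply,
    iteratedFDeriv_apply_eq_iteratedDeriv_mul_prod, smul_eq_mul, mul_comm]

theorem abs_iteratedFDeriv_three_comp_clm_le {f : ℝ → ℝ} (hf : ContDiff ℝ 3 f) {R : ℝ}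
    (hR : ∀ s, |iteratedDeriv 3 f s| ≤ R * iteratedDeriv 2 f s)
    {L : E →L[ℝ] ℝ} {K : ℝ} (hL : ‖L‖ ≤ K) (θ u v : E) :
    |iteratedFDeriv ℝ 3 (f ∘ L) θ ![u, u, v]| ≤
      R * K * ‖v‖ * iteratedFDeriv ℝ 2 (f ∘ L) θ ![u, u] := by
  rw [iteratedFDeriv_comp_clm_apply hf, iteratedFDeriv_comp_clm_apply (hf.of_le (by norm_num)),
    Fin.prod_univ_three, Fin.prod_univ_two]
  simp only [Matrix.cons_val_zero, Matrix.cons_val_one, Matrix.cons_val_two, Matrix.head_cons,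
    Matrix.tail_cons]
  set s := L θ
  have hLv : |L v| ≤ K * ‖v‖ :=
    (L.le_opNorm v).trans (mul_le_mul_of_nonneg_right hL (norm_nonneg v))
  have hR_nonneg : 0 ≤ R * iteratedDeriv 2 f s := (abs_nonneg _).trans (hR s)
  calc |iteratedDeriv 3 f s * (L u * L u * L v)|
      = |iteratedDeriv 3 f s| * (L u * L u) * |L v| := by
        rw [abs_mul, abs_mul, abs_mul_self]; ring
    _ ≤ R * iteratedDeriv 2 f s * (L u * L u) * (K * ‖v‖) :=
        mul_le_mul (mul_le_mul_of_nonneg_right (hR s) (mul_self_nonneg _)) hLv (abs_nonneg _)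
          (mul_nonneg hR_nonneg (mul_self_nonneg _))
    _ = R * K * ‖v‖ * (iteratedDeriv 2 f s * (L u * L u)) := by ring

end CompLinear

section LogisticLoss

noncomputable def logisticLoss (s : ℝ) : ℝ := log (1 + exp (-s))

theorem contDiff_logisticLoss {n : WithTop ℕ∞} : ContDiff ℝ n logisticLoss :=
  (contDiff_const.add (contDiff_exp.comp contDiff_neg)).log fun _ =>
    (add_pos one_pos (exp_pos _)).ne'

theorem hasDerivAt_logisticLoss (s : ℝ) : HasDerivAt logisticLoss (sigmoid s - 1) s := by
  have h := ((hasDerivAt_neg' s).exp.const_add 1).log (add_pos one_pos (exp_pos (-s))).ne'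
  refine h.congr_deriv ?_
  rw [sigmoid_def]
  field_simp
  ring

theorem iteratedDeriv_two_logisticLoss :
    iteratedDeriv 2 logisticLoss = fun s => sigmoid s * (1 - sigmoid s) := by
  have h : deriv logisticLoss = fun s => sigmoid s - 1 :=
    funext fun s => (hasDerivAt_logisticLoss s).deriv
  rw [iteratedDeriv_succ, iteratedDeriv_one, h]
  funext s
  rw [deriv_sub_const, deriv_sigmoid]

theorem iteratedDeriv_three_logisticLoss :
    iteratedDeriv 3 logisticLoss =
      fun s => sigmoid s * (1 - sigmoid s) * (1 - 2 * sigmoid s) := by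
  rw [iteratedDeriv_succ, iteratedDeriv_two_logisticLoss]
  funext s
  have hσ := hasDerivAt_sigmoid s
  have h : HasDerivAt (fun s => sigmoid s * (1 - sigmoid s))
      (sigmoid s * (1 - sigmoid s) * (1 - sigmoid s) +
        sigmoid s * (0 - sigmoid s * (1 - sigmoid s))) s :=
    hσ.mul ((hasDerivAt_const s 1).sub hσ)
  rw [h.deriv]
  ring

theorem abs_iteratedDeriv_three_logisticLoss_le (s : ℝ) :
    |iteratedDeriv 3 logisticLoss s| ≤ iteratedDeriv 2 logisticLoss s := by
  have hσ : 0 ≤ sigmoid s * (1 - sigmoid s) :=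
    mul_nonneg (sigmoid_nonneg s) (sub_nonneg.2 (sigmoid_le_one s))
  rw [iteratedDeriv_three_logisticLoss, iteratedDeriv_two_logisticLoss, abs_mul,
    abs_of_nonneg hσ]
  refine mul_le_of_le_one_right hσ (abs_le.2 ⟨?_, ?_⟩)
  · linarith [sigmoid_le_one s]
  · linarith [sigmoid_nonneg s]

end LogisticLoss

/-- The binary logistic loss `ℓ(θ) = log(1 + exp(-y θᵀx))` with `‖x‖ ≤ M` and `y ∈ {±1}`
is pseudo self-concordant with parameter `R = M`. -/
theorem stmt_8 {p : ℕ} (x : EuclideanSpace ℝ (Fin p)) (M : ℝ) (hx : ‖x‖ ≤ M)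
    (y : ℝ) (hy : y = 1 ∨ y = -1) :
    ∀ (θ u v : EuclideanSpace ℝ (Fin p)),
      |iteratedFDeriv ℝ 3
          (fun θ => Real.log (1 + Real.exp (-(y * (inner ℝ θ x : ℝ))))) θ ![u, u, v]| ≤
        M * ‖v‖ *
          (iteratedFDeriv ℝ 2
            (fun θ => Real.log (1 + Real.exp (-(y * (inner ℝ θ x : ℝ))))) θ ![u, u]) := by
  intro θ u v
  have hℓ : (fun θ => Real.log (1 + Real.exp (-(y * (inner ℝ θ x : ℝ))))) =
      logisticLoss ∘ innerSL ℝ (y • x) := by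
    funext θ
    simp [logisticLoss, real_inner_comm]
  have hL : ‖innerSL ℝ (y • x)‖ ≤ M := by
    have hy_abs : |y| = 1 := by rcases hy with rfl | rfl <;> norm_num
    rwa [innerSL_apply_norm, norm_smul, Real.norm_eq_abs, hy_abs, one_mul]
  have hR (s : ℝ) : |iteratedDeriv 3 logisticLoss s| ≤ 1 * iteratedDeriv 2 logisticLoss s := by
    simpa only [one_mul] using abs_iteratedDeriv_three_logisticLoss_le s
  simpa only [hℓ, one_mul] using
    abs_iteratedFDeriv_three_comp_clm_le contDiff_logisticLoss hR hL θ u v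
end

section
/- For a continuous knapsack-type polytope, the linear maximum over the discrete set equals the maximum over its convex hull: with W_α = {w ∈ Δ^{n−1} : exactly αn coordinates of w are zero and the remaining (1−α)n coordinates equal 1/((1−α)n)} and αn an integer, the convex hull of W_α equals {w ∈ Δ^{n−1} : w_i ≤ 1/((1−α)n) for all i}, and max_{w∈W_α} ⟨w,v⟩ = max over this convex hull, for every v ∈ ℝ^n. -/
/-!
The capped simplex `{w ≥ 0, ∑ w = 1, w ≤ 1/m}` is compact and convex, so by Krein–Milman it is
the closed convex hull of its extreme points. An extreme point cannot have a coordinate strictly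
between `0` and `1/m`: since `∑ w = 1` and `m` is an integer, there would be a second such
coordinate, and moving mass between the two in either direction stays in the set. So every extreme
point is uniform on an `m`-subset, and the convex hull of these finitely many points is closed.
The equality of suprema is the maximum principle for a linear function on a convex hull.
-/

open Finset

theorem notMem_extremePoints_of_add_mem_of_sub_mem {𝕜 E : Type*} [Field 𝕜] [LinearOrder 𝕜]
    [IsStrictOrderedRing 𝕜] [AddCommGroup E] [Module 𝕜 E] {A : Set E} {x d : E} (hd : d ≠ 0)
    (hadd : x + d ∈ A) (hsub : x - d ∈ A) : x ∉ A.extremePoints 𝕜 := by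
  intro hx
  have hmid : x ∈ openSegment 𝕜 (x + d) (x - d) :=
    ⟨1 / 2, 1 / 2, by norm_num, by norm_num, by norm_num, by module⟩
  exact hd (add_eq_left.mp (hx.2 hadd hsub hmid))

theorem ConvexOn.sSup_image_convexHull {E : Type*} [AddCommGroup E] [Module ℝ E] {f : E → ℝ}
    (hf : ConvexOn ℝ Set.univ f) {s : Set E} (hne : s.Nonempty) (hbdd : BddAbove (f '' s)) :
    sSup (f '' convexHull ℝ s) = sSup (f '' s) := by
  have hle : ∀ y ∈ f '' convexHull ℝ s, y ≤ sSup (f '' s) := by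
    rintro _ ⟨x, hx, rfl⟩
    obtain ⟨y, hy, hxy⟩ := hf.exists_ge_of_mem_convexHull (Set.subset_univ s) hx
    exact hxy.trans (le_csSup hbdd (Set.mem_image_of_mem f hy))
  exact (csSup_le ((hne.mono (subset_convexHull ℝ s)).image f) hle).antisymm
    (csSup_le_csSup ⟨_, hle⟩ (hne.image f) (Set.image_mono (subset_convexHull ℝ s)))

section CappedSimplex

variable {ι : Type*} [Fintype ι]

def cappedSimplex (ι : Type*) [Fintype ι] (c : ℝ) : Set (ι → ℝ) :=
  {w | (∀ i, 0 ≤ w i) ∧ ∑ i, w i = 1 ∧ ∀ i, w i ≤ c}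

theorem cappedSimplex_eq_inter (c : ℝ) :
    cappedSimplex ι c = stdSimplex ℝ ι ∩ Set.Iic (fun _ => c) :=
  Set.ext fun _ => and_assoc.symm

theorem convex_cappedSimplex (c : ℝ) : Convex ℝ (cappedSimplex ι c) := by
  rw [cappedSimplex_eq_inter]
  exact (convex_stdSimplex ℝ ι).inter (convex_Iic _)

theorem isCompact_cappedSimplex (c : ℝ) : IsCompact (cappedSimplex ι c) := by
  rw [cappedSimplex_eq_inter]
  exact (isCompact_stdSimplex ℝ ι).inter_right isClosed_Iic

variable [DecidableEq ι]

def uniformSubsetVectors (ι : Type*) [Fintype ι] [DecidableEq ι] (m : ℕ) : Set (ι → ℝ) :=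
  {w | ∃ S : Finset ι, S.card = m ∧ w = fun i => if i ∈ S then (m : ℝ)⁻¹ else 0}

theorem uniformSubsetVectors_finite (m : ℕ) : (uniformSubsetVectors ι m).Finite :=
  (Set.finite_range fun S : Finset ι => fun i => if i ∈ S then (m : ℝ)⁻¹ else 0).subset
    fun _ ⟨S, _, hw⟩ => ⟨S, hw.symm⟩

theorem uniformSubsetVectors_nonempty {m : ℕ} (hm : m ≤ Fintype.card ι) :
    (uniformSubsetVectors ι m).Nonempty :=
  let ⟨S, _, hS⟩ := exists_subset_card_eq (s := (univ : Finset ι)) hm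
  ⟨_, S, hS, rfl⟩

theorem uniformSubsetVectors_subset_cappedSimplex {m : ℕ} (hm : 0 < m) :
    uniformSubsetVectors ι m ⊆ cappedSimplex ι (m : ℝ)⁻¹ := by
  rintro _ ⟨S, hS, rfl⟩
  refine ⟨fun i => by positivity, ?_, fun i => ?_⟩
  · rw [sum_ite_mem, univ_inter, sum_const, hS, nsmul_eq_mul]
    exact mul_inv_cancel₀ (by positivity)
  · dsimp only
    split_ifs
    exacts [le_rfl, by positivity]

theorem mem_uniformSubsetVectors_of_forall_eq_zero_or_eq {m : ℕ} (hm : 0 < m) {w : ι → ℝ}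
    (hw : ∑ i, w i = 1) (hvals : ∀ i, w i = 0 ∨ w i = (m : ℝ)⁻¹) :
    w ∈ uniformSubsetVectors ι m := by
  classical
  have hw_eq : w = fun i => if i ∈ univ.filter (w · ≠ 0) then (m : ℝ)⁻¹ else 0 := by
    funext i
    rcases hvals i with h | h <;> simp [h, hm.ne']
  refine ⟨univ.filter (w · ≠ 0), ?_, hw_eq⟩
  rw [hw_eq, sum_ite_mem, univ_inter, sum_const, nsmul_eq_mul] at hw
  have : (m : ℝ) ≠ 0 := by positivity
  field_simp at hw
  exact_mod_cast hw

theorem add_smul_single_sub_single_mem_cappedSimplex {c δ : ℝ} {w : ι → ℝ}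
    (hw : w ∈ cappedSimplex ι c) {i j : ι} (hij : i ≠ j) (hi : w i + δ ∈ Set.Icc 0 c)
    (hj : w j - δ ∈ Set.Icc 0 c) :
    w + δ • (Pi.single i 1 - Pi.single j 1) ∈ cappedSimplex ι c := by
  obtain ⟨hw0, hw1, hwc⟩ := hw
  have hbound : ∀ l, (w + δ • (Pi.single i 1 - Pi.single j 1) : ι → ℝ) l ∈ Set.Icc 0 c := by
    intro l
    by_cases hli : l = i
    · subst hli; simpa [hij] using hi
    by_cases hlj : l = j
    · subst hlj; simpa [hli, sub_eq_add_neg] using hj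
    simpa [hli, hlj] using ⟨hw0 l, hwc l⟩
  refine ⟨fun l => (hbound l).1, ?_, fun l => (hbound l).2⟩
  simp [sum_add_distrib, ← mul_sum, hw1]

theorem exists_ne_mem_Ioo_of_mem_cappedSimplex {m : ℕ} (hm : 0 < m) {w : ι → ℝ}
    (hw : w ∈ cappedSimplex ι (m : ℝ)⁻¹) {i : ι} (hi : w i ∈ Set.Ioo 0 (m : ℝ)⁻¹) :
    ∃ j ≠ i, w j ∈ Set.Ioo 0 (m : ℝ)⁻¹ := by
  classical
  obtain ⟨hw0, hw1, hwc⟩ := hw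
  by_contra! hrest
  have hvals : ∀ j ∈ univ.erase i, w j ≠ 0 → w j = (m : ℝ)⁻¹ := fun j hj hj0 =>
    (hwc j).antisymm (not_lt.mp fun hlt =>
      hrest j (ne_of_mem_erase hj) ⟨(hw0 j).lt_of_ne' hj0, hlt⟩)
  set t := #((univ.erase i).filter (w · ≠ 0))
  have hsum_rest : ∑ j ∈ univ.erase i, w j = t * (m : ℝ)⁻¹ := by
    rw [← sum_filter_ne_zero, sum_congr rfl fun j hj => hvals j (mem_filter.mp hj).1
      (mem_filter.mp hj).2, sum_const, nsmul_eq_mul]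
  -- `m * w i = m - t` would be an integer strictly between `0` and `1`.
  have hwi : (m : ℝ) * w i = ((m - t : ℤ) : ℝ) := by
    have hsplit := add_sum_erase univ w (mem_univ i)
    rw [hsum_rest, hw1] at hsplit
    rw [eq_sub_of_add_eq hsplit]
    push_cast
    field_simp
  have hpos : (0 : ℝ) < ((m - t : ℤ) : ℝ) := hwi ▸ mul_pos (by positivity) hi.1
  have hlt : ((m - t : ℤ) : ℝ) < 1 := by
    rw [← hwi, ← mul_inv_cancel₀ (by positivity : (m : ℝ) ≠ 0)]
    exact mul_lt_mul_of_pos_left hi.2 (by positivity)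
  have : (0 : ℤ) < m - t := by exact_mod_cast hpos
  have : (m - t : ℤ) < 1 := by exact_mod_cast hlt
  omega

theorem extremePoints_cappedSimplex_subset {m : ℕ} (hm : 0 < m) :
    (cappedSimplex ι (m : ℝ)⁻¹).extremePoints ℝ ⊆ uniformSubsetVectors ι m := by
  intro w hw
  obtain ⟨hw0, hw1, hwc⟩ := hw.1
  refine mem_uniformSubsetVectors_of_forall_eq_zero_or_eq hm hw1 fun i => ?_
  by_contra! hfrac
  have hi : w i ∈ Set.Ioo 0 (m : ℝ)⁻¹ :=
    ⟨(hw0 i).lt_of_ne' hfrac.1, (hwc i).lt_of_ne hfrac.2⟩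
  obtain ⟨j, hji, hj⟩ := exists_ne_mem_Ioo_of_mem_cappedSimplex hm hw.1 hi
  set ε := min (min (w i) ((m : ℝ)⁻¹ - w i)) (min (w j) ((m : ℝ)⁻¹ - w j))
  have hε : 0 < ε := by
    simp only [ε, lt_min_iff, sub_pos]
    exact ⟨hi, hj⟩
  have hεi : ε ≤ w i ∧ ε ≤ (m : ℝ)⁻¹ - w i :=
    ⟨(min_le_left _ _).trans (min_le_left _ _), (min_le_left _ _).trans (min_le_right _ _)⟩
  have hεj : ε ≤ w j ∧ ε ≤ (m : ℝ)⁻¹ - w j :=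
    ⟨(min_le_right _ _).trans (min_le_left _ _), (min_le_right _ _).trans (min_le_right _ _)⟩
  have hd : ε • (Pi.single i 1 - Pi.single j 1 : ι → ℝ) ≠ 0 := by
    refine smul_ne_zero hε.ne' fun h => ?_
    simpa [hji.symm] using congr_fun h i
  refine notMem_extremePoints_of_add_mem_of_sub_mem hd
    (add_smul_single_sub_single_mem_cappedSimplex hw.1 hji.symm
      ⟨by linarith, by linarith⟩ ⟨by linarith, by linarith⟩) ?_ hw
  rw [sub_eq_add_neg, ← neg_smul]
  exact add_smul_single_sub_single_mem_cappedSimplex hw.1 hji.symm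
    ⟨by linarith, by linarith⟩ ⟨by linarith, by linarith⟩

theorem convexHull_uniformSubsetVectors {m : ℕ} (hm : 0 < m) :
    convexHull ℝ (uniformSubsetVectors ι m) = cappedSimplex ι (m : ℝ)⁻¹ := by
  refine (convexHull_min (uniformSubsetVectors_subset_cappedSimplex hm)
    (convex_cappedSimplex _)).antisymm ?_
  calc cappedSimplex ι (m : ℝ)⁻¹
      = closure (convexHull ℝ ((cappedSimplex ι (m : ℝ)⁻¹).extremePoints ℝ)) :=
        (closure_convexHull_extremePoints (isCompact_cappedSimplex _)
          (convex_cappedSimplex _)).symm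
    _ ⊆ closure (convexHull ℝ (uniformSubsetVectors ι m)) :=
        closure_mono (convexHull_mono (extremePoints_cappedSimplex_subset hm))
    _ = convexHull ℝ (uniformSubsetVectors ι m) :=
        ((uniformSubsetVectors_finite m).isClosed_convexHull ℝ).closure_eq

end CappedSimplex

/-- The convex hull of the set `W_α` of uniform distributions over subsets of `[n]` of size
`(1-α)n` is the capped simplex `{w ∈ Δ^{n-1} : w_i ≤ 1/((1-α)n)}`, and the linear maximum
over `W_α` equals the maximum over its convex hull. -/
theorem stmt_9 (n k : ℕ) (α : ℝ) (hα : 0 < α ∧ α < 1) (hk : (k : ℝ) = α * n) (hn : 0 < n) :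
    (convexHull ℝ {w : Fin n → ℝ | ∃ S : Finset (Fin n), S.card = n - k ∧
        w = fun i => if i ∈ S then ((n : ℝ) - k)⁻¹ else 0} =
      {w : Fin n → ℝ | (∀ i, 0 ≤ w i) ∧ ∑ i, w i = 1 ∧ ∀ i, w i ≤ ((n : ℝ) - k)⁻¹}) ∧
    ∀ v : Fin n → ℝ,
      sSup ((fun w : Fin n → ℝ => ∑ i, w i * v i) ''
          {w : Fin n → ℝ | ∃ S : Finset (Fin n), S.card = n - k ∧
            w = fun i => if i ∈ S then ((n : ℝ) - k)⁻¹ else 0}) =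
      sSup ((fun w : Fin n → ℝ => ∑ i, w i * v i) ''
          convexHull ℝ {w : Fin n → ℝ | ∃ S : Finset (Fin n), S.card = n - k ∧
            w = fun i => if i ∈ S then ((n : ℝ) - k)⁻¹ else 0}) := by
  have hkn : k < n := by
    have : (k : ℝ) < n := by
      rw [hk]
      exact mul_lt_of_lt_one_left (by exact_mod_cast hn) hα.2
    exact_mod_cast this
  rw [← Nat.cast_sub hkn.le]
  refine ⟨convexHull_uniformSubsetVectors (Nat.sub_pos_of_lt hkn), fun v => ?_⟩
  have hne : (uniformSubsetVectors (Fin n) (n - k)).Nonempty :=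
    uniformSubsetVectors_nonempty (by simp)
  exact ((Fintype.linearCombination ℝ v).convexOn convex_univ).sSup_image_convexHull hne
    ((uniformSubsetVectors_finite _).image _).bddAbove |>.symm
end

section
/- For an integrable random variable Z ∼ P and α ∈ (0,1), the dual representations of the superquantile agree: inf_{η∈ℝ} {η + (1/(1−α)) E[(Z−η)₊]} = sup{E_Q[Z] : Q ≪ P, dQ/dP ≤ 1/(1−α)}. -/
/-!
Weak duality: an admissible `Q` satisfies `Q ≤ (1-α)⁻¹ • P`, so integrating `Z ≤ η + (Z-η)₊`
against `Q` gives `E_Q[Z] ≤ η + (1-α)⁻¹ E_P[(Z-η)₊]` for every `η`.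
Attainment: take `η` an `α`-quantile of `Z`, so `P(Z > η) ≤ 1-α ≤ P(Z ≥ η)`, and let `Q` have
density `(1-α)⁻¹` on `{Z > η}`, `0` on `{Z < η}`, and on the atom `{Z = η}` whatever constant makes
`Q` a probability. Then `dQ/dP · (Z-η) = (1-α)⁻¹ (Z-η)₊` pointwise, and the bound becomes an equality.
-/

open MeasureTheory Set Filter ProbabilityTheory
open scoped ENNReal

theorem ciInf_eq_csSup_of_forall_le_of_mem {α ι : Type*} [ConditionallyCompleteLattice α]
    {f : ι → α} {S : Set α} (h : ∀ t ∈ S, ∀ i, t ≤ f i) {i₀ : ι} (hi₀ : f i₀ ∈ S) :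
    ⨅ i, f i = sSup S := by
  have : Nonempty ι := ⟨i₀⟩
  rw [IsGreatest.csSup_eq ⟨hi₀, fun t ht ↦ h t ht i₀⟩]
  exact le_antisymm (ciInf_le ⟨f i₀, by rintro _ ⟨i, rfl⟩; exact h _ hi₀ i⟩ i₀) (le_ciInf (h _ hi₀))

theorem StieltjesFunction.exists_leftLim_le_le (f : StieltjesFunction ℝ) {a : ℝ}
    (hlow : ∃ x, f x < a) (hhigh : ∃ x, a ≤ f x) : ∃ η, Function.leftLim f η ≤ a ∧ a ≤ f η := by
  obtain ⟨x₀, hx₀⟩ := hlow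
  set s := {x | a ≤ f x}
  have hbdd : BddBelow s := ⟨x₀, fun y (hy : a ≤ f y) ↦ (f.mono.reflect_lt (hx₀.trans_le hy)).le⟩
  refine ⟨sInf s, ?_, ?_⟩
  · rw [f.mono.leftLim_eq_sSup]
    refine csSup_le (nonempty_Iio.image f) ?_
    rintro _ ⟨x, hx, rfl⟩
    exact (not_le.1 fun h ↦ (csInf_le hbdd h).not_gt hx).le
  · refine ge_of_tendsto ((f.right_continuous _).mono Ioi_subset_Ici_self).tendsto ?_
    filter_upwards [self_mem_nhdsWithin] with x (hx : sInf s < x)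
    obtain ⟨y, hy, hyx⟩ := exists_lt_of_csInf_lt hhigh hx
    exact le_trans hy (f.mono hyx.le)

theorem exists_measure_Ioi_le_le_measure_Ici (μ : Measure ℝ) [IsProbabilityMeasure μ] {α : ℝ}
    (hα : α ∈ Ioo (0 : ℝ) 1) :
    ∃ η, μ (Ioi η) ≤ ENNReal.ofReal (1 - α) ∧ ENNReal.ofReal (1 - α) ≤ μ (Ici η) := by
  obtain ⟨η, hleft, hright⟩ := (cdf μ).exists_leftLim_le_le
    ((tendsto_cdf_atBot μ).eventually (eventually_lt_nhds hα.1)).exists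
    (((tendsto_cdf_atTop μ).eventually (eventually_gt_nhds hα.2)).exists.imp fun _ ↦ le_of_lt)
  refine ⟨η, ?_, ?_⟩
  · rw [← measure_cdf μ, (cdf μ).measure_Ioi (tendsto_cdf_atTop μ)]
    exact ENNReal.ofReal_le_ofReal (by linarith)
  · rw [← measure_cdf μ, (cdf μ).measure_Ici (tendsto_cdf_atTop μ)]
    exact ENNReal.ofReal_le_ofReal (by linarith)

theorem MeasureTheory.Measure.le_smul_of_ae_rnDeriv_le {α : Type*} [MeasurableSpace α]
    {μ ν : Measure α} [μ.HaveLebesgueDecomposition ν] (hμν : μ ≪ ν) {c : ℝ≥0∞}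
    (h : ∀ᵐ x ∂ν, μ.rnDeriv ν x ≤ c) : μ ≤ c • ν :=
  calc μ = ν.withDensity (μ.rnDeriv ν) := (Measure.withDensity_rnDeriv_eq μ ν hμν).symm
    _ ≤ ν.withDensity (fun _ ↦ c) := withDensity_mono h
    _ = c • ν := withDensity_const c

section Superquantile

variable {Ω : Type*} [MeasurableSpace Ω] {P : Measure Ω} {Z : Ω → ℝ}

theorem integral_le_add_mul_integral_max_sub [IsFiniteMeasure P] {Q : Measure Ω}
    [IsProbabilityMeasure Q] (hZ : Integrable Z P) {c : ℝ} (hc : 0 ≤ c)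
    (hQP : Q ≤ ENNReal.ofReal c • P) (η : ℝ) :
    ∫ ω, Z ω ∂Q ≤ η + c * ∫ ω, max (Z ω - η) 0 ∂P := by
  have hZcP : Integrable (fun ω ↦ max (Z ω - η) 0) (ENNReal.ofReal c • P) :=
    (hZ.sub (integrable_const η)).pos_part.smul_measure ENNReal.ofReal_ne_top
  have hZQ : Integrable (fun ω ↦ max (Z ω - η) 0) Q := hZcP.mono_measure hQP
  calc ∫ ω, Z ω ∂Q ≤ ∫ ω, (η + max (Z ω - η) 0) ∂Q :=
        integral_mono ((hZ.smul_measure ENNReal.ofReal_ne_top).mono_measure hQP)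
          ((integrable_const η).add hZQ) fun ω ↦ by simp only [le_max_left, ← sub_le_iff_le_add']
    _ = η + ∫ ω, max (Z ω - η) 0 ∂Q := by rw [integral_add (integrable_const η) hZQ]; simp
    _ ≤ η + ∫ ω, max (Z ω - η) 0 ∂(ENNReal.ofReal c • P) := by
        gcongr
        exact ae_of_all _ fun ω ↦ le_max_right _ _
    _ = η + c * ∫ ω, max (Z ω - η) 0 ∂P := by
        rw [integral_smul_measure, ENNReal.toReal_ofReal hc, smul_eq_mul]

theorem exists_density_mul_sub_eq_mul_max [IsFiniteMeasure P] (hZ : Measurable Z) {β η : ℝ}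
    (hβ : 0 < β) (h₁ : P.real {ω | η < Z ω} ≤ β) (h₂ : β ≤ P.real {ω | η ≤ Z ω}) :
    ∃ φ : Ω → ℝ, Measurable φ ∧ (∀ ω, φ ω ∈ Icc 0 β⁻¹) ∧ ∫ ω, φ ω ∂P = 1 ∧
      ∀ ω, φ ω * (Z ω - η) = β⁻¹ * max (Z ω - η) 0 := by
  set A := {ω | η < Z ω}
  set B := {ω | Z ω = η}
  have hA : MeasurableSet A := measurableSet_lt measurable_const hZ
  have hB : MeasurableSet B := measurableSet_eq_fun hZ measurable_const
  have hAB : P.real {ω | η ≤ Z ω} = P.real A + P.real B := by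
    rw [← measureReal_union (disjoint_left.2 fun ω hA hB ↦ hA.ne' hB) hB]
    congr 1
    ext ω
    simp [A, B, le_iff_lt_or_eq, eq_comm]
  set θ := (β - P.real A) / P.real B
  have hθ : θ ∈ Icc 0 1 := ⟨div_nonneg (sub_nonneg.2 h₁) measureReal_nonneg,
    div_le_one_of_le₀ (by linarith) measureReal_nonneg⟩
  have hθB : θ * P.real B = β - P.real A := div_mul_cancel_of_imp fun h ↦ by linarith
  refine ⟨fun ω ↦ β⁻¹ * (A.indicator (fun _ ↦ 1) ω + B.indicator (fun _ ↦ θ) ω),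
    ((measurable_const.indicator hA).add (measurable_const.indicator hB)).const_mul _, ?_, ?_, ?_⟩
  · intro ω
    rcases lt_trichotomy (Z ω) η with h | h | h
    · simp [A, B, h.not_gt, h.ne, hβ.le]
    · simp only [A, B, h, mem_ofPred_eq, lt_irrefl, not_false_eq_true, indicator_of_notMem,
        indicator_of_mem, zero_add, mem_Icc]
      exact ⟨mul_nonneg (inv_nonneg.2 hβ.le) hθ.1, mul_le_of_le_one_right (inv_nonneg.2 hβ.le) hθ.2⟩
    · simp [A, B, h, h.ne', hβ.le]
  · rw [integral_const_mul, integral_add ((integrable_const 1).indicator hA)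
      ((integrable_const θ).indicator hB), integral_indicator_const _ hA,
      integral_indicator_const _ hB, smul_eq_mul, smul_eq_mul, mul_comm (P.real B), hθB]
    field_simp
    ring
  · intro ω
    rcases lt_trichotomy (Z ω) η with h | h | h
    · simp [A, B, h.not_gt, h.ne, h.le]
    · simp [A, B, h]
    · simp [A, B, h, h.ne', h.le]

variable [IsProbabilityMeasure P]

theorem exists_integral_eq_add_inv_mul_integral_max_sub_of_measurable (hZm : Measurable Z)
    (hZ : Integrable Z P) {α : ℝ} (hα : α ∈ Ioo (0 : ℝ) 1) :
    ∃ η, ∃ Q : Measure Ω, IsProbabilityMeasure Q ∧ Q ≪ P ∧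
      (∀ᵐ ω ∂P, Q.rnDeriv P ω ≤ ENNReal.ofReal ((1 - α)⁻¹)) ∧
      ∫ ω, Z ω ∂Q = η + (1 - α)⁻¹ * ∫ ω, max (Z ω - η) 0 ∂P := by
  have hβ : 0 < 1 - α := sub_pos.2 hα.2
  have := Measure.isProbabilityMeasure_map (μ := P) hZm.aemeasurable
  obtain ⟨η, h₁, h₂⟩ := exists_measure_Ioi_le_le_measure_Ici (P.map Z) hα
  rw [Measure.map_apply hZm measurableSet_Ioi] at h₁
  rw [Measure.map_apply hZm measurableSet_Ici] at h₂
  obtain ⟨φ, hφm, hφ, hφ_one, hφZ⟩ := exists_density_mul_sub_eq_mul_max hZm hβ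
    (ENNReal.toReal_le_of_le_ofReal hβ.le h₁)
    ((ENNReal.ofReal_le_iff_le_toReal (measure_ne_top _ _)).1 h₂)
  have hφint : Integrable φ P :=
    .of_bound hφm.aestronglyMeasurable _ (ae_of_all _ fun ω ↦ by
      rw [Real.norm_of_nonneg (hφ ω).1]; exact (hφ ω).2)
  refine ⟨η, P.withDensity fun ω ↦ ENNReal.ofReal (φ ω), ⟨?_⟩,
    withDensity_absolutelyContinuous _ _, ?_, ?_⟩
  · rw [withDensity_apply _ .univ, setLIntegral_univ, ← ofReal_integral_eq_lintegral_ofReal hφint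
      (ae_of_all _ fun ω ↦ (hφ ω).1), hφ_one, ENNReal.ofReal_one]
  · filter_upwards [Measure.rnDeriv_withDensity P hφm.ennreal_ofReal] with ω h
    rw [h]
    exact ENNReal.ofReal_le_ofReal (hφ ω).2
  calc ∫ ω, Z ω ∂P.withDensity (fun ω ↦ ENNReal.ofReal (φ ω))
      = ∫ ω, φ ω * Z ω ∂P := by
        rw [integral_withDensity_eq_integral_toReal_smul hφm.ennreal_ofReal
          (ae_of_all _ fun _ ↦ ENNReal.ofReal_lt_top)]
        congr with ω
        rw [ENNReal.toReal_ofReal (hφ ω).1, smul_eq_mul]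
    _ = ∫ ω, (η * φ ω + (1 - α)⁻¹ * max (Z ω - η) 0) ∂P := by
        congr with ω
        rw [← hφZ]
        ring
    _ = η + (1 - α)⁻¹ * ∫ ω, max (Z ω - η) 0 ∂P := by
        have hpos : Integrable (fun ω ↦ max (Z ω - η) 0) P :=
          (hZ.sub (integrable_const η)).pos_part
        rw [integral_add (hφint.const_mul η) (hpos.const_mul _), integral_const_mul,
          integral_const_mul, hφ_one, mul_one]

theorem exists_integral_eq_add_inv_mul_integral_max_sub (hZ : Integrable Z P) {α : ℝ}
    (hα : α ∈ Ioo (0 : ℝ) 1) :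
    ∃ η, ∃ Q : Measure Ω, IsProbabilityMeasure Q ∧ Q ≪ P ∧
      (∀ᵐ ω ∂P, Q.rnDeriv P ω ≤ ENNReal.ofReal ((1 - α)⁻¹)) ∧
      ∫ ω, Z ω ∂Q = η + (1 - α)⁻¹ * ∫ ω, max (Z ω - η) 0 ∂P := by
  have hZZ' := hZ.aestronglyMeasurable.ae_eq_mk
  obtain ⟨η, Q, hQ, hQP, hbd, hQZ⟩ := exists_integral_eq_add_inv_mul_integral_max_sub_of_measurable
    hZ.aestronglyMeasurable.stronglyMeasurable_mk.measurable (hZ.congr hZZ') hα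
  refine ⟨η, Q, hQ, hQP, hbd, ?_⟩
  rw [integral_congr_ae (hQP.ae_eq hZZ'), hQZ]
  congr 2
  exact integral_congr_ae (hZZ'.fun_comp fun z ↦ max (z - η) 0).symm

end Superquantile

/-- Dual representations of the superquantile (conditional value at risk) agree:
`inf_η {η + (1/(1-α)) E[(Z-η)₊]} = sup {E_Q[Z] : Q ≪ P, dQ/dP ≤ 1/(1-α)}`. -/
theorem stmt_11 {Ω : Type*} [MeasurableSpace Ω] (P : Measure Ω) [IsProbabilityMeasure P]
    (Z : Ω → ℝ) (hZ : Integrable Z P) (α : ℝ) (hα : α ∈ Set.Ioo (0 : ℝ) 1) :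
    (⨅ η : ℝ, (η + (1 - α)⁻¹ * ∫ ω, max (Z ω - η) 0 ∂P)) =
      sSup {t : ℝ | ∃ Q : Measure Ω, IsProbabilityMeasure Q ∧ Q ≪ P ∧
        (∀ᵐ ω ∂P, Q.rnDeriv P ω ≤ ENNReal.ofReal ((1 - α)⁻¹)) ∧ t = ∫ ω, Z ω ∂Q} := by
  obtain ⟨η₀, Q₀, hQ₀, hQ₀P, hQ₀bd, hQ₀Z⟩ := exists_integral_eq_add_inv_mul_integral_max_sub hZ hα
  refine ciInf_eq_csSup_of_forall_le_of_mem ?_ ⟨Q₀, hQ₀, hQ₀P, hQ₀bd, hQ₀Z.symm⟩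
  rintro t ⟨Q, hQ, hQP, hbd, rfl⟩ η
  exact integral_le_add_mul_integral_max_sub hZ (inv_nonneg.2 (sub_pos.2 hα.2).le)
    (Measure.le_smul_of_ae_rnDeriv_le hQP hbd) η
end
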